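/- If M and M* are matchings with |M*| - |M| = k ≥ 1 in a graph with n vertices, then there exists an augmenting path with respect to M of length at most n/k - 1 (in particular, less than n/k edges plus endpoints, i.e., with fewer than n/k vertices on average per path). -/

import Mathlib

open SimpleGraph

def IsMatchingF {V : Type*} (G : SimpleGraph V) (M : Finset (Sym2 V)) : Prop :=
  ↑M ⊆ G.edgeSet ∧ ∀ e ∈ M, ∀ f ∈ M, e ≠ f → ∀ v : V, v ∈ e → v ∉ f

def Unmatched {V : Type*} (M : Set (Sym2 V)) (v : V) : Prop := ∀ e ∈ M, v ∉ e

def AltList {V : Type*} (M : Set (Sym2 V)) : Bool → List (Sym2 V) → Prop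
  | _, [] => True
  | b, e :: l => (e ∈ M ↔ b = true) ∧ AltList M (!b) l

def edgesOf {V : Type*} (l : List V) : List (Sym2 V) :=
  (l.zip l.tail).map fun p => s(p.1, p.2)

def IsAugPathL {V : Type*} (G : SimpleGraph V) (M : Set (Sym2 V)) (l : List V) : Prop :=
  2 ≤ l.length ∧ l.Nodup ∧ l.Chain' G.Adj ∧
  AltList M false (edgesOf l) ∧ AltList M false (edgesOf l).reverse ∧
  (∀ v, l.head? = some v → Unmatched M v) ∧
  (∀ v, l.getLast? = some v → Unmatched M v)

section Helpers

variable {V : Type*}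

lemma mem_of_getLast?' {l : List V} {a : V} (h : l.getLast? = some a) : a ∈ l := by
  induction l with
  | nil => simp at h
  | cons b t ih =>
    cases t with
    | nil => simp_all
    | cons c t' =>
      rw [List.getLast?_cons_cons] at h
      exact List.mem_cons_of_mem _ (ih h)

@[simp] lemma altList_nil (M : Set (Sym2 V)) (b : Bool) : AltList M b [] := trivial

@[simp] lemma altList_cons (M : Set (Sym2 V)) (b : Bool) (e : Sym2 V) (l : List (Sym2 V)) :
    AltList M b (e :: l) ↔ (e ∈ M ↔ b = true) ∧ AltList M (!b) l := Iff.rfl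

@[simp] lemma edgesOf_nil : edgesOf ([] : List V) = [] := rfl

@[simp] lemma edgesOf_single (a : V) : edgesOf [a] = [] := rfl

@[simp] lemma edgesOf_cons₂ (a b : V) (t : List V) :
    edgesOf (a :: b :: t) = s(a, b) :: edgesOf (b :: t) := rfl

lemma edgesOf_length (l : List V) (h : l ≠ []) : (edgesOf l).length + 1 = l.length := by
  match l with
  | [a] => simp
  | a :: b :: t =>
    simp only [edgesOf_cons₂, List.length_cons]
    have := edgesOf_length (b :: t) (by simp)
    simpa using this

lemma mem_of_mem_edgesOf {l : List V} {e : Sym2 V} (he : e ∈ edgesOf l) {v : V} (hv : v ∈ e) :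
    v ∈ l := by
  match l with
  | [] => simp [edgesOf] at he
  | [a] => simp [edgesOf] at he
  | a :: b :: t =>
    rw [edgesOf_cons₂] at he
    rcases List.mem_cons.1 he with h | h
    · subst h
      rcases Sym2.mem_iff.1 hv with rfl | rfl <;> simp
    · have := mem_of_mem_edgesOf h hv
      simp at this ⊢; tauto

lemma exists_edge_of_mem {l : List V} (h2 : 2 ≤ l.length) {v : V} (hv : v ∈ l) :
    ∃ e ∈ edgesOf l, v ∈ e := by
  match l with
  | a :: b :: t =>
    rcases List.mem_cons.1 hv with h | hv'
    · exact ⟨s(a, b), by simp, by simp [h]⟩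
    · rcases t with _ | ⟨c, t⟩
      · have h : v = b := by simpa using hv'
        exact ⟨s(a, b), by simp, by simp [h]⟩
      · obtain ⟨e, he, hve⟩ := exists_edge_of_mem (l := b :: c :: t) (by simp) hv'
        exact ⟨e, by rw [edgesOf_cons₂]; exact List.mem_cons_of_mem _ he, hve⟩

lemma altList_congr {S T : Set (Sym2 V)} {b : Bool} {es : List (Sym2 V)}
    (h : ∀ e ∈ es, (e ∈ S ↔ e ∈ T)) (ha : AltList S b es) : AltList T b es := by
  induction es generalizing b with
  | nil => trivial
  | cons e t ih =>
    exact ⟨(h e (by simp)).symm.trans ha.1, ih (fun f hf => h f (by simp [hf])) ha.2⟩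

lemma altList_append {S : Set (Sym2 V)} {b : Bool} {es fs : List (Sym2 V)}
    (h1 : AltList S b es) (h2 : AltList S (if es.length % 2 = 0 then b else !b) fs) :
    AltList S b (es ++ fs) := by
  induction es generalizing b with
  | nil => simpa using h2
  | cons e t ih =>
    rw [List.length_cons] at h2
    refine ⟨h1.1, ih h1.2 ?_⟩
    by_cases hp : t.length % 2 = 0
    · rw [if_pos hp]
      rw [if_neg (by omega)] at h2
      exact h2
    · rw [if_neg hp, Bool.not_not]
      rw [if_pos (by omega)] at h2
      exact h2

lemma altList_reverse {S : Set (Sym2 V)} {b : Bool} {es : List (Sym2 V)}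
    (h : AltList S b es) :
    AltList S (if es.length % 2 = 1 then b else !b) es.reverse := by
  induction es generalizing b with
  | nil => simp
  | cons e t ih =>
    have iht := ih h.2
    rw [List.reverse_cons, List.length_cons]
    by_cases hp : t.length % 2 = 0
    · rw [if_pos (by omega : (t.length + 1) % 2 = 1)]
      rw [if_neg (by omega), Bool.not_not] at iht
      refine altList_append iht ?_
      rw [List.length_reverse, if_pos hp]
      exact ⟨h.1, trivial⟩
    · rw [if_neg (by omega : ¬ (t.length + 1) % 2 = 1)]
      rw [if_pos (by omega)] at iht
      refine altList_append iht ?_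
      rw [List.length_reverse, if_neg hp, Bool.not_not]
      exact ⟨h.1, trivial⟩

lemma matchingF_subset {G : SimpleGraph V} {M M' : Finset (Sym2 V)}
    (hM : IsMatchingF G M) (h : M' ⊆ M) : IsMatchingF G M' :=
  ⟨fun e he => hM.1 (by exact_mod_cast h (by exact_mod_cast he)),
   fun e he f hf => hM.2 e (h he) f (h hf)⟩

lemma walk [DecidableEq V] (G : SimpleGraph V) :
    ∀ (N : ℕ) (M Mstar : Finset (Sym2 V)), IsMatchingF G M → IsMatchingF G Mstar →
    Mstar.card ≤ N → ∀ v₀ e₁, Unmatched (↑M) v₀ → e₁ ∈ Mstar → v₀ ∈ e₁ →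
    ∃ l : List V, l.head? = some v₀ ∧ 2 ≤ l.length ∧ l.Nodup ∧ l.Chain' G.Adj ∧
      AltList (↑M) false (edgesOf l) ∧ (edgesOf l).Nodup ∧
      (∀ e ∈ edgesOf l, e ∈ M ∨ e ∈ Mstar) ∧
      (∀ e ∈ M, ∀ v ∈ e, v ∈ l → e ∈ edgesOf l) ∧
      (∀ e ∈ Mstar, ∀ v ∈ e, v ∈ l → e ∈ edgesOf l) ∧
      (((∀ w, l.getLast? = some w → Unmatched (↑M) w) ∧
        (edgesOf l).countP (· ∈ Mstar) = (edgesOf l).countP (· ∈ M) + 1 ∧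
        (edgesOf l).length % 2 = 1) ∨
       ((∀ w, l.getLast? = some w → Unmatched (↑Mstar) w) ∧
        (edgesOf l).countP (· ∈ Mstar) = (edgesOf l).countP (· ∈ M))) := by
  intro N
  induction N with
  | zero =>
    intro M Mstar _ _ hcard v₀ e₁ _ he₁ _
    rw [Nat.le_zero, Finset.card_eq_zero] at hcard
    subst hcard; simp at he₁
  | succ n ih =>
    intro M Mstar hM hMs hcard v₀ e₁ hv₀ he₁ hv₀e₁
    obtain ⟨v₁, rfl⟩ := Sym2.mem_iff_exists.1 hv₀e₁
    have hadj01 : G.Adj v₀ v₁ := G.mem_edgeSet.1 (hMs.1 (by exact_mod_cast he₁))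
    have hne01 : v₀ ≠ v₁ := hadj01.ne
    have he₁M : s(v₀, v₁) ∉ M := fun h => hv₀ _ (Finset.mem_coe.2 h) hv₀e₁
    by_cases h1 : ∀ e ∈ M, v₁ ∉ e
    · -- path [v₀, v₁], augmenting
      refine ⟨[v₀, v₁], rfl, by simp, by simp [hne01], by simp [List.Chain', hadj01], ?_, by simp, ?_, ?_, ?_, ?_⟩
      · exact ⟨by simp [he₁M], trivial⟩
      · intro e he
        have h : e = s(v₀, v₁) := by simpa using he
        exact Or.inr (h ▸ he₁)
      · intro e he v hve hvl
        exfalso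
        rcases (by simpa using hvl : v = v₀ ∨ v = v₁) with rfl | rfl
        · exact hv₀ _ (Finset.mem_coe.2 he) hve
        · exact h1 e he hve
      · intro e he v hve hvl
        have hv : v ∈ s(v₀, v₁) := by
          rcases (by simpa using hvl : v = v₀ ∨ v = v₁) with rfl | rfl <;> simp
        have : e = s(v₀, v₁) := by
          by_contra hne
          exact hMs.2 e he _ he₁ hne v hve hv
        simp [this]
      · left
        refine ⟨?_, ?_, by simp⟩
        · intro w hw
          have hwv : v₁ = w := by simpa using hw
          subst hwv
          exact fun e he hv => h1 e (Finset.mem_coe.1 he) hv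
        · simp [List.countP_cons, he₁, he₁M]
    · push_neg at h1
      obtain ⟨f, hfM, hv₁f⟩ := h1
      obtain ⟨v₂, rfl⟩ := Sym2.mem_iff_exists.1 hv₁f
      have hadj12 : G.Adj v₁ v₂ := G.mem_edgeSet.1 (hM.1 (by exact_mod_cast hfM))
      have hne12 : v₁ ≠ v₂ := hadj12.ne
      have hfne₁ : s(v₁, v₂) ≠ s(v₀, v₁) := fun h => he₁M (h ▸ hfM)
      have hv₀f : v₀ ∉ s(v₁, v₂) := hv₀ _ (Finset.mem_coe.2 hfM)
      have hne02 : v₀ ≠ v₂ := fun h => hv₀f (by simp [h])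
      have hfMs : s(v₁, v₂) ∉ Mstar := fun h =>
        hMs.2 _ h _ he₁ hfne₁ v₁ (by simp) (by simp)
      by_cases h2 : ∀ e ∈ Mstar, v₂ ∉ e
      · -- path [v₀, v₁, v₂], balanced
        refine ⟨[v₀, v₁, v₂], rfl, by simp, by simp [hne01, hne02, hne12], by simp [List.Chain', hadj01, hadj12],
          ?_, by simp [hfne₁.symm], ?_, ?_, ?_, ?_⟩
        · exact ⟨by simp [he₁M], by simp [hfM], trivial⟩
        · intro e he
          rcases (by simpa using he : e = s(v₀,v₁) ∨ e = s(v₁,v₂)) with rfl | rfl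
          · exact Or.inr he₁
          · exact Or.inl hfM
        · intro e he v hve hvl
          rcases (by simpa using hvl : v = v₀ ∨ v = v₁ ∨ v = v₂) with h | h | h
          · exact absurd hve (by rw [h]; exact hv₀ _ (Finset.mem_coe.2 he))
          · have heq : e = s(v₁, v₂) := by
              by_contra hne
              exact hM.2 e he _ hfM hne v hve (by simp [h])
            simp [heq]
          · have heq : e = s(v₁, v₂) := by
              by_contra hne
              exact hM.2 e he _ hfM hne v hve (by simp [h])
            simp [heq]
        · intro e he v hve hvl
          rcases (by simpa using hvl : v = v₀ ∨ v = v₁ ∨ v = v₂) with h | h | h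
          · have heq : e = s(v₀, v₁) := by
              by_contra hne
              exact hMs.2 e he _ he₁ hne v hve (by simp [h])
            simp [heq]
          · have heq : e = s(v₀, v₁) := by
              by_contra hne
              exact hMs.2 e he _ he₁ hne v hve (by simp [h])
            simp [heq]
          · exact absurd hve (by rw [h]; exact h2 e he)
        · right
          refine ⟨?_, ?_⟩
          · intro w hw
            have hwv : v₂ = w := by simpa using hw
            subst hwv
            exact fun e he hv => h2 e (Finset.mem_coe.1 he) hv
          · simp [List.countP_cons, he₁, he₁M, hfM, hfMs]
      · push_neg at h2
        obtain ⟨g, hgMs, hv₂g⟩ := h2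
        have hgne₁ : g ≠ s(v₀, v₁) := by
          rintro rfl
          rcases Sym2.mem_iff.1 hv₂g with h | h
          · exact hne02 h.symm
          · exact hne12 h.symm
        set M' := M.erase s(v₁, v₂) with hM'def
        set Ms' := Mstar.erase s(v₀, v₁) with hMs'def
        have hM' : IsMatchingF G M' := matchingF_subset hM (Finset.erase_subset _ _)
        have hMs' : IsMatchingF G Ms' := matchingF_subset hMs (Finset.erase_subset _ _)
        have hcard' : Ms'.card ≤ n := by
          rw [Finset.card_erase_of_mem he₁]
          omega
        have hv₂M' : Unmatched (↑M') v₂ := by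
          intro e he hv₂e
          have heM : e ∈ M := Finset.mem_of_mem_erase (Finset.mem_coe.1 he)
          have hnef : e ≠ s(v₁, v₂) := (Finset.mem_erase.1 (Finset.mem_coe.1 he)).1
          exact hM.2 e heM _ hfM hnef v₂ hv₂e (by simp)
        have hgMs' : g ∈ Ms' := Finset.mem_erase.2 ⟨hgne₁, hgMs⟩
        obtain ⟨l', hhd, hln, hnd, hch, hal, hen, hsb, hmc, hsc, hbr⟩ :=
          ih M' Ms' hM' hMs' hcard' v₂ g hv₂M' hgMs' hv₂g
        -- l' = v₂ :: t
        obtain ⟨t, rfl⟩ : ∃ t, l' = v₂ :: t := by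
          cases l' with
          | nil => simp at hhd
          | cons a t => exact ⟨t, by simpa using hhd⟩
        have hfM' : s(v₁, v₂) ∉ M' := Finset.notMem_erase _ _
        have he₁Ms' : s(v₀, v₁) ∉ Ms' := Finset.notMem_erase _ _
        -- edges of l' differ from the two new edges
        have edge_ne : ∀ e ∈ edgesOf (v₂ :: t), e ≠ s(v₀, v₁) ∧ e ≠ s(v₁, v₂) := by
          intro e he
          rcases hsb e he with h | h
          · exact ⟨fun hh => he₁M (hh ▸ Finset.mem_of_mem_erase h),
              fun hh => hfM' (hh ▸ h)⟩
          · exact ⟨fun hh => he₁Ms' (hh ▸ h), fun hh => hfMs (hh ▸ Finset.mem_of_mem_erase h)⟩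
        have memM_iff : ∀ e ∈ edgesOf (v₂ :: t), (e ∈ M ↔ e ∈ M') := by
          intro e he
          rw [Finset.mem_erase]
          exact ⟨fun h => ⟨(edge_ne e he).2, h⟩, fun h => h.2⟩
        have memMs_iff : ∀ e ∈ edgesOf (v₂ :: t), (e ∈ Mstar ↔ e ∈ Ms') := by
          intro e he
          rw [Finset.mem_erase]
          exact ⟨fun h => ⟨(edge_ne e he).1, h⟩, fun h => h.2⟩
        have hv₀l' : v₀ ∉ v₂ :: t := by
          intro h
          obtain ⟨e, he, hv⟩ := exists_edge_of_mem hln h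
          rcases hsb e he with hh | hh
          · exact hv₀ _ (Finset.mem_coe.2 (Finset.mem_of_mem_erase hh)) hv
          · have heMs : e ∈ Mstar := Finset.mem_of_mem_erase hh
            have : e = s(v₀, v₁) := by
              by_contra hne
              exact hMs.2 e heMs _ he₁ hne v₀ hv hv₀e₁
            exact (Finset.mem_erase.1 hh).1 this
        have hv₁l' : v₁ ∉ v₂ :: t := by
          intro h
          obtain ⟨e, he, hv⟩ := exists_edge_of_mem hln h
          rcases hsb e he with hh | hh
          · have heM : e ∈ M := Finset.mem_of_mem_erase hh
            have : e = s(v₁, v₂) := by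
              by_contra hne
              exact hM.2 e heM _ hfM hne v₁ hv (by simp)
            exact (Finset.mem_erase.1 hh).1 this
          · have heMs : e ∈ Mstar := Finset.mem_of_mem_erase hh
            have : e = s(v₀, v₁) := by
              by_contra hne
              exact hMs.2 e heMs _ he₁ hne v₁ hv (by simp)
            exact (Finset.mem_erase.1 hh).1 this
        -- the extended path
        refine ⟨v₀ :: v₁ :: v₂ :: t, rfl, by simp, ?_, ?_, ?_, ?_, ?_, ?_, ?_, ?_⟩
        · refine List.Nodup.cons ?_ (List.Nodup.cons hv₁l' hnd)
          simp only [List.mem_cons] at *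
          push_neg
          exact ⟨hne01, fun h => hv₀l' (by simp [h]), fun h => hv₀l' (by simp [h])⟩
        · rw [List.Chain', List.isChain_cons_cons]
          exact ⟨hadj01, by rw [List.isChain_cons_cons]; exact ⟨hadj12, hch⟩⟩
        · refine ⟨by simp [he₁M], by simp [hfM], ?_⟩
          exact altList_congr (fun e he => by
            simpa using (memM_iff e he).symm) hal
        · rw [edgesOf_cons₂, edgesOf_cons₂]
          refine List.Nodup.cons ?_ (List.Nodup.cons (fun h => (edge_ne _ h).2 rfl) hen)
          simp only [List.mem_cons]
          push_neg
          exact ⟨hfne₁.symm, fun h => (edge_ne _ h).1 rfl⟩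
        · intro e he
          rw [edgesOf_cons₂, edgesOf_cons₂] at he
          rcases List.mem_cons.1 he with rfl | he'
          · exact Or.inr he₁
          rcases List.mem_cons.1 he' with rfl | he''
          · exact Or.inl hfM
          rcases hsb e he'' with h | h
          · exact Or.inl (Finset.mem_of_mem_erase h)
          · exact Or.inr (Finset.mem_of_mem_erase h)
        · -- M closure
          intro e he v hve hvl
          rw [edgesOf_cons₂, edgesOf_cons₂]
          rcases List.mem_cons.1 hvl with h | hvl'
          · exact absurd hve (by rw [h]; exact hv₀ _ (Finset.mem_coe.2 he))
          rcases List.mem_cons.1 hvl' with h | hvl''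
          · have heq : e = s(v₁, v₂) := by
              by_contra hne
              exact hM.2 e he _ hfM hne v hve (by simp [h])
            simp [heq]
          · by_cases hef : e = s(v₁, v₂)
            · simp [hef]
            · have : e ∈ edgesOf (v₂ :: t) :=
                hmc e (Finset.mem_erase.2 ⟨hef, he⟩) v hve hvl''
              simp [this]
        · -- Mstar closure
          intro e he v hve hvl
          rw [edgesOf_cons₂, edgesOf_cons₂]
          rcases List.mem_cons.1 hvl with h | hvl'
          · have heq : e = s(v₀, v₁) := by
              by_contra hne
              exact hMs.2 e he _ he₁ hne v hve (by simp [h])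
            simp [heq]
          rcases List.mem_cons.1 hvl' with h | hvl''
          · have heq : e = s(v₀, v₁) := by
              by_contra hne
              exact hMs.2 e he _ he₁ hne v hve (by simp [h])
            simp [heq]
          · by_cases hee : e = s(v₀, v₁)
            · subst hee
              rcases Sym2.mem_iff.1 hve with rfl | rfl
              · exact absurd hvl'' hv₀l'
              · exact absurd hvl'' hv₁l'
            · have : e ∈ edgesOf (v₂ :: t) :=
                hsc e (Finset.mem_erase.2 ⟨hee, he⟩) v hve hvl''
              simp [this]
        · -- the final branch
          have hlast_eq : (v₀ :: v₁ :: v₂ :: t).getLast? = (v₂ :: t).getLast? := by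
            rw [List.getLast?_cons_cons, List.getLast?_cons_cons]
          have ht_ne : t ≠ [] := by
            intro h; subst h; simp at hln
          have hwl' : ∀ w, (v₂ :: t).getLast? = some w → w ∈ v₂ :: t ∧ w ≠ v₂ := by
            intro w hw
            refine ⟨mem_of_getLast?' hw, ?_⟩
            cases t with
            | nil => simp at ht_ne
            | cons c t' =>
              rw [List.getLast?_cons_cons] at hw
              have hwm : w ∈ c :: t' := mem_of_getLast?' hw
              intro hwv
              subst hwv
              exact (List.nodup_cons.1 hnd).1 hwm
          have hcnt_eqMs : (edgesOf (v₂ :: t)).countP (· ∈ Mstar) =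
              (edgesOf (v₂ :: t)).countP (· ∈ Ms') := by
            refine List.countP_congr ?_
            intro e he
            simp only [decide_eq_true_eq]
            exact memMs_iff e he
          have hcnt_eqM : (edgesOf (v₂ :: t)).countP (· ∈ M) =
              (edgesOf (v₂ :: t)).countP (· ∈ M') := by
            refine List.countP_congr ?_
            intro e he
            simp only [decide_eq_true_eq]
            exact memM_iff e he
          have hcnts : (edgesOf (v₀ :: v₁ :: v₂ :: t)).countP (· ∈ Mstar) =
              (edgesOf (v₂ :: t)).countP (· ∈ Ms') + 1 := by
            rw [edgesOf_cons₂, edgesOf_cons₂, List.countP_cons, List.countP_cons]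
            simp [he₁, hfMs, hcnt_eqMs]
          have hcntm : (edgesOf (v₀ :: v₁ :: v₂ :: t)).countP (· ∈ M) =
              (edgesOf (v₂ :: t)).countP (· ∈ M') + 1 := by
            rw [edgesOf_cons₂, edgesOf_cons₂, List.countP_cons, List.countP_cons]
            simp [he₁M, hfM, hcnt_eqM]
          rcases hbr with ⟨hlast, hcnt, hpar⟩ | ⟨hlast, hcnt⟩
          · left
            refine ⟨?_, ?_, ?_⟩
            · intro w hw
              rw [hlast_eq] at hw
              obtain ⟨hwmem, hwne⟩ := hwl' w hw
              intro e he hwe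
              by_cases hef : e = s(v₁, v₂)
              · subst hef
                rcases Sym2.mem_iff.1 hwe with rfl | rfl
                · exact hv₁l' hwmem
                · exact hwne rfl
              · exact hlast w hw e (Finset.mem_coe.2
                  (Finset.mem_erase.2 ⟨hef, Finset.mem_coe.1 he⟩)) hwe
            · rw [hcnts, hcntm, hcnt]
            · rw [edgesOf_cons₂, edgesOf_cons₂]
              simp only [List.length_cons]
              omega
          · right
            refine ⟨?_, ?_⟩
            · intro w hw
              rw [hlast_eq] at hw
              obtain ⟨hwmem, _⟩ := hwl' w hw
              intro e he hwe
              by_cases hee : e = s(v₀, v₁)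
              · subst hee
                rcases Sym2.mem_iff.1 hwe with rfl | rfl
                · exact hv₀l' hwmem
                · exact hv₁l' hwmem
              · exact hlast w hw e (Finset.mem_coe.2
                  (Finset.mem_erase.2 ⟨hee, Finset.mem_coe.1 he⟩)) hwe
            · rw [hcnts, hcntm, hcnt]

lemma exists_free_vertex [Fintype V] [DecidableEq V] {G : SimpleGraph V}
    {M Mstar : Finset (Sym2 V)} (hM : IsMatchingF G M) (hMs : IsMatchingF G Mstar)
    (h : M.card < Mstar.card) :
    ∃ v₀ e₁, Unmatched (↑M) v₀ ∧ e₁ ∈ Mstar ∧ v₀ ∈ e₁ := by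
  by_contra hc
  push_neg at hc
  have hcov : ∀ (A : Finset (Sym2 V)), IsMatchingF G A →
      (A.biUnion (fun e => Finset.univ.filter (· ∈ e))).card = 2 * A.card := by
    intro A hA
    rw [Finset.card_biUnion]
    · rw [Finset.sum_congr rfl (g := fun _ => 2) ?_, Finset.sum_const, smul_eq_mul, mul_comm]
      intro e he
      have hedge : e ∈ G.edgeSet := hA.1 (Finset.mem_coe.2 he)
      induction e using Sym2.ind with
      | _ a b =>
        have hab : a ≠ b := G.ne_of_adj (G.mem_edgeSet.1 hedge)
        have : Finset.univ.filter (· ∈ s(a, b)) = {a, b} := by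
          ext v; simp [Sym2.mem_iff]
        rw [this]
        simp [hab]
    · intro e he f hf hne
      rw [Function.onFun, Finset.disjoint_left]
      intro v hv hvf
      simp only [Finset.mem_filter, Finset.mem_univ, true_and] at hv hvf
      exact hA.2 e he f hf hne v hv hvf
  have hsub : Mstar.biUnion (fun e => Finset.univ.filter (· ∈ e)) ⊆
      M.biUnion (fun e => Finset.univ.filter (· ∈ e)) := by
    intro v hv
    simp only [Finset.mem_biUnion, Finset.mem_filter, Finset.mem_univ, true_and] at hv ⊢
    obtain ⟨e, he, hve⟩ := hv
    by_cases hu : Unmatched (↑M) v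
    · exact absurd hve (hc v e hu he)
    · unfold Unmatched at hu
      push_neg at hu
      obtain ⟨f, hf, hvf⟩ := hu
      exact ⟨f, Finset.mem_coe.1 hf, hvf⟩
  have := Finset.card_le_card hsub
  rw [hcov M hM, hcov Mstar hMs] at this
  omega

lemma mem_of_head?' {l : List V} {a : V} (h : l.head? = some a) : a ∈ l := by
  cases l with
  | nil => simp at h
  | cons b t => simp at h; simp [h]

lemma le_sum_of_forall_le (L : List (List V)) (m : ℕ) (h : ∀ l ∈ L, m ≤ l.length) :
    L.length * m ≤ (L.map List.length).sum := by
  induction L with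
  | nil => simp
  | cons a t ih =>
    simp only [List.map_cons, List.sum_cons, List.length_cons]
    have h1 := h a (by simp)
    have h2 := ih (fun l hl => h l (by simp [hl]))
    calc (t.length + 1) * m = t.length * m + m := by ring
      _ ≤ (t.map List.length).sum + a.length := by omega
      _ = a.length + (t.map List.length).sum := by ring

lemma main_lemma [Fintype V] [DecidableEq V] (G : SimpleGraph V) :
    ∀ (N : ℕ) (M Mstar : Finset (Sym2 V)), IsMatchingF G M → IsMatchingF G Mstar →
    Mstar.card ≤ N → ∀ k, Mstar.card = M.card + k →
    ∃ L : List (List V), L.length = k ∧ L.Pairwise List.Disjoint ∧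
      ∀ l ∈ L, IsAugPathL G (↑M) l ∧ (∀ e ∈ edgesOf l, e ∈ M ∨ e ∈ Mstar) := by
  intro N
  induction N with
  | zero =>
    intro M Mstar _ _ hcard k hk
    have : k = 0 := by omega
    subst this
    exact ⟨[], rfl, by simp, by simp⟩
  | succ n ih =>
    intro M Mstar hM hMs hcard k hk
    cases k with
    | zero => exact ⟨[], rfl, by simp, by simp⟩
    | succ k =>
      have hlt : M.card < Mstar.card := by omega
      obtain ⟨v₀, e₁, hv₀, he₁, hv₀e₁⟩ := exists_free_vertex hM hMs hlt
      obtain ⟨l, hhd, hln, hnd, hch, hal, hen, hsb, hmc, hsc, hbr⟩ :=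
        walk G Mstar.card M Mstar hM hMs le_rfl v₀ e₁ hv₀ he₁ hv₀e₁
      set E := edgesOf l with hEdef
      set M' := M.filter (fun e => e ∉ E) with hM'def
      set Ms' := Mstar.filter (fun e => e ∉ E) with hMs'def
      have hM'm : IsMatchingF G M' := matchingF_subset hM (Finset.filter_subset _ _)
      have hMs'm : IsMatchingF G Ms' := matchingF_subset hMs (Finset.filter_subset _ _)
      have key : ∀ (A : Finset (Sym2 V)),
          A.card = (A.filter (fun e => e ∉ E)).card + E.countP (· ∈ A) := by
        intro A
        have heq : A.filter (fun e => ¬ e ∉ E) = (E.filter (· ∈ A)).toFinset := by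
          ext e
          simp only [Finset.mem_filter, not_not, List.mem_toFinset, List.mem_filter,
            decide_eq_true_eq]
          tauto
        have h1 : (A.filter (fun e => ¬ e ∉ E)).card = E.countP (· ∈ A) := by
          rw [heq, List.toFinset_card_of_nodup (hen.filter _), List.countP_eq_length_filter]
        have h2 := Finset.card_filter_add_card_filter_not
          (s := A) (p := fun e => e ∉ E)
        omega
      have hMcard := key M
      have hMscard := key Mstar
      rw [← hM'def] at hMcard
      rw [← hMs'def] at hMscard
      -- edges of M' / Ms' avoid vertices of l
      have havoid : ∀ e : Sym2 V, (e ∈ M' ∨ e ∈ Ms') → ∀ v ∈ e, v ∉ l := by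
        intro e he v hve hvl
        rcases he with h | h
        · exact (Finset.mem_filter.1 h).2 (hmc e (Finset.mem_filter.1 h).1 v hve hvl)
        · exact (Finset.mem_filter.1 h).2 (hsc e (Finset.mem_filter.1 h).1 v hve hvl)
      -- lifting augmenting paths from (M', Ms') to (M, Mstar)
      have hlift : ∀ l₂ : List V,
          (IsAugPathL G (↑M') l₂ ∧ ∀ e ∈ edgesOf l₂, e ∈ M' ∨ e ∈ Ms') →
          (IsAugPathL G (↑M) l₂ ∧ (∀ e ∈ edgesOf l₂, e ∈ M ∨ e ∈ Mstar)) ∧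
            (∀ v ∈ l₂, v ∉ l) := by
        intro l₂ hh
        obtain ⟨hp, hsub2⟩ := hh
        obtain ⟨hp1, hp2, hp3, hp4, hp5, hp6, hp7⟩ := hp
        have hdisj : ∀ v ∈ l₂, v ∉ l := by
          intro v hv hvl
          obtain ⟨e, he, hve⟩ := exists_edge_of_mem hp1 hv
          exact havoid e (hsub2 e he) v hve hvl
        have hmem : ∀ e ∈ edgesOf l₂, (e ∈ (↑M' : Set (Sym2 V)) ↔ e ∈ (↑M : Set (Sym2 V))) := by
          intro e he
          simp only [Finset.mem_coe]
          constructor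
          · exact fun h => (Finset.mem_filter.1 h).1
          · intro hEM
            refine Finset.mem_filter.2 ⟨hEM, ?_⟩
            intro hE
            have hx := Sym2.out_fst_mem e
            exact hdisj _ (mem_of_mem_edgesOf he hx) (mem_of_mem_edgesOf hE hx)
        have hunm : ∀ v ∈ l₂, Unmatched (↑M') v → Unmatched (↑M) v := by
          intro v hv hu e he hvev
          by_cases heM' : e ∈ M'
          · exact hu e (Finset.mem_coe.2 heM') hvev
          · have heM : e ∈ M := Finset.mem_coe.1 he
            have heE : e ∈ E := by
              by_contra hne
              exact heM' (Finset.mem_filter.2 ⟨heM, hne⟩)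
            exact hdisj v hv (mem_of_mem_edgesOf heE hvev)
        refine ⟨⟨⟨hp1, hp2, hp3, altList_congr hmem hp4,
          altList_congr (fun e he => hmem e (List.mem_reverse.1 he)) hp5,
          fun v hv => hunm v (mem_of_head?' hv) (hp6 v hv),
          fun v hv => hunm v (mem_of_getLast?' hv) (hp7 v hv)⟩, ?_⟩, hdisj⟩
        intro e he
        rcases hsub2 e he with h | h
        · exact Or.inl (Finset.mem_filter.1 h).1
        · exact Or.inr (Finset.mem_filter.1 h).1
      rcases hbr with ⟨hlastM, hcnt, hpar⟩ | ⟨hlastMs, hcnt⟩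
      · -- augmenting component: peel it off
        have hcard' : Ms'.card ≤ n := by omega
        have hdiff' : Ms'.card = M'.card + k := by omega
        obtain ⟨L', hL'len, hL'pw, hL'props⟩ := ih M' Ms' hM'm hMs'm hcard' k hdiff'
        refine ⟨l :: L', by simp [hL'len], ?_, ?_⟩
        · refine List.pairwise_cons.2 ⟨?_, hL'pw⟩
          intro l₂ hl₂ v hvl hvl₂
          exact (hlift l₂ (hL'props l₂ hl₂)).2 v hvl₂ hvl
        · intro l₂ hl₂
          rcases List.mem_cons.1 hl₂ with rfl | hmem2
          · refine ⟨⟨hln, hnd, hch, hal, ?_, ?_, hlastM⟩, fun e he => hsb e he⟩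
            · have := altList_reverse hal
              rw [if_pos hpar] at this
              exact this
            · intro v hv
              rw [hhd] at hv
              have : v₀ = v := by injection hv
              exact this ▸ hv₀
          · exact (hlift l₂ (hL'props l₂ hmem2)).1
      · -- balanced component: discard it and recurse
        have hlne : l ≠ [] := by
          intro h; rw [h] at hln; simp at hln
        have hcstar : 1 ≤ E.countP (· ∈ Mstar) := by
          have hElen := edgesOf_length l hlne
          rw [← hEdef] at hElen
          rcases hE' : E with _ | ⟨e', rest⟩
          · rw [hE'] at hElen
            simp at hElen
            omega
          · have hal' := hal
            rw [hE'] at hal'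
            have he'M : e' ∉ M := by
              intro h
              have := hal'.1.1 (Finset.mem_coe.2 h)
              simp at this
            have he'Ms : e' ∈ Mstar := by
              have := hsb e' (by rw [hE']; simp)
              tauto
            rw [List.countP_cons]
            simp [he'Ms]
        have hcard' : Ms'.card ≤ n := by omega
        have hdiff' : Ms'.card = M'.card + (k + 1) := by omega
        obtain ⟨L', hL'len, hL'pw, hL'props⟩ := ih M' Ms' hM'm hMs'm hcard' (k + 1) hdiff'
        exact ⟨L', hL'len, hL'pw, fun l₂ h => (hlift l₂ (hL'props l₂ h)).1⟩

end Helpers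

/-- If `|M*| - |M| = k ≥ 1` in a graph on `n` vertices, then there is an augmenting
path w.r.t. `M` with at most `n/k` vertices, i.e. at most `n/k - 1` edges. -/
theorem stmt12 {V : Type*} [Fintype V] [DecidableEq V] (G : SimpleGraph V)
    (M Mstar : Finset (Sym2 V)) (hM : IsMatchingF G M) (hMstar : IsMatchingF G Mstar)
    (k : ℕ) (hk : 1 ≤ k) (hdiff : Mstar.card = M.card + k) :
    ∃ l : List V, IsAugPathL G (↑M) l ∧
      (edgesOf l).length + 1 ≤ Fintype.card V / k := by
  obtain ⟨L, hlen, hpw, hprops⟩ := main_lemma G Mstar.card M Mstar hM hMstar le_rfl k hdiff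
  have hflat : L.flatten.Nodup :=
    List.nodup_flatten.2 ⟨fun l hl => (hprops l hl).1.2.1, hpw⟩
  have htot : (L.map List.length).sum ≤ Fintype.card V := by
    rw [← List.length_flatten]
    exact hflat.length_le_card
  have hex : ∃ l ∈ L, l.length ≤ Fintype.card V / k := by
    by_contra hcon
    push_neg at hcon
    have hsum := le_sum_of_forall_le L (Fintype.card V / k + 1)
      (fun l hl => Nat.succ_le_of_lt (hcon l hl))
    rw [hlen] at hsum
    have hdm := Nat.div_add_mod (Fintype.card V) k
    have hmod : Fintype.card V % k < k := Nat.mod_lt _ (by omega)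
    set q := Fintype.card V / k with hq
    have hmul : k * (q + 1) = k * q + k := by ring
    rw [hmul] at hsum
    set t := k * q with ht
    omega
  obtain ⟨l, hlL, hlle⟩ := hex
  have hlne : l ≠ [] := by
    have h2 := (hprops l hlL).1.1
    intro h; rw [h] at h2; simp at h2
  have := edgesOf_length l hlne
  exact ⟨l, (hprops l hlL).1, by omega⟩
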